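/- Let c̃₁, c̃₂ ∈ Homeo_ℤ(ℝ), let k ≥ 1 be an integer, and suppose there exist real numbers x₁⁰ < x₂⁰ < x₁¹ < x₂¹ < ⋯ < x₁^{k−1} < x₂^{k−1} < x₁⁰ + 1 such that c̃ᵢ(xᵢʲ + m) = xᵢʲ + m for all i ∈ {1,2}, all j ∈ {0,…,k−1}, and all m ∈ ℤ (i.e., each xᵢʲ is a lift of a fixed point of cᵢ, and the fixed points of c₁ and c₂ form k alternating pairs on the circle). Then τ(c̃₁ c̃₂) ≤ 1/k. -/

import Mathlib

/-!
Put `x k := x 0 + 1`. The lift `c̃₂` fixes `y j ≥ x j`, and `c̃₁` fixes `x (j + 1) ≥ y j`,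
so by monotonicity `c̃₁ c̃₂` maps `x j` below `x (j + 1)`. Iterating `k` times gives
`(c̃₁ c̃₂)^k (x 0) ≤ x 0 + 1`, hence `k τ(c̃₁ c̃₂) = τ((c̃₁ c̃₂)^k) ≤ 1`.
-/

open Function

theorem Monotone.apply_apply_le_of_isFixedPt {α : Type*} [Preorder α] {f g : α → α}
    (hf : Monotone f) (hg : Monotone g) {a b c : α} (hab : a ≤ b) (hbc : b ≤ c)
    (hgb : IsFixedPt g b) (hfc : IsFixedPt f c) : f (g a) ≤ c :=
  calc f (g a) ≤ f (g b) := hf (hg hab)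
    _ = f b := congrArg f hgb
    _ ≤ f c := hf hbc
    _ = c := hfc

namespace CircleDeg1Lift

theorem translationNumber_le_div_of_pow_apply_le (f : CircleDeg1Lift) {n : ℕ} (hn : 0 < n)
    {x : ℝ} {m : ℤ} (h : (f ^ n) x ≤ x + m) : translationNumber f ≤ m / n := by
  have hτ : n * translationNumber f ≤ m :=
    translationNumber_pow f n ▸ translationNumber_le_of_le_add_int _ h
  rw [le_div_iff₀ (by exact_mod_cast hn)]
  linarith

end CircleDeg1Lift

/-- If the fixed points of `c₁` and `c₂` contain `k` alternating pairs
`x₁⁰ < x₂⁰ < x₁¹ < x₂¹ < ⋯ < x₁^{k-1} < x₂^{k-1} < x₁⁰ + 1` (each fixed together with all its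
integer translates), then `τ(c̃₁ c̃₂) ≤ 1/k`. -/
theorem translationNumber_mul_le_of_alternating_pairs (c₁ c₂ : CircleDeg1Liftˣ)
    (k : ℕ) (hk : 1 ≤ k) (x y : ℕ → ℝ)
    (hxy : ∀ j < k, x j < y j)
    (hyx : ∀ j, j + 1 < k → y j < x (j + 1))
    (hwrap : y (k - 1) < x 0 + 1)
    (hfix1 : ∀ j < k, ∀ m : ℤ, (c₁ : CircleDeg1Lift) (x j + m) = x j + m)
    (hfix2 : ∀ j < k, ∀ m : ℤ, (c₂ : CircleDeg1Lift) (y j + m) = y j + m) :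
    CircleDeg1Lift.translationNumber ↑(c₁ * c₂) ≤ 1 / (k : ℝ) := by
  set f : CircleDeg1Lift := ↑(c₁ * c₂)
  have hf : ∀ t, f t = (c₁ : CircleDeg1Lift) ((c₂ : CircleDeg1Lift) t) := fun _ => rfl
  set z : ℕ → ℝ := fun j => if j < k then x j else x 0 + 1
  have hz0 : z 0 = x 0 := if_pos (by omega)
  have hstep : ∀ j < k, f (z j) ≤ z (j + 1) := by
    intro j hj
    have hy : IsFixedPt (c₂ : CircleDeg1Lift) (y j) := by simpa [IsFixedPt] using hfix2 j hj 0
    have hx : IsFixedPt (c₁ : CircleDeg1Lift) (z (j + 1)) ∧ y j ≤ z (j + 1) := by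
      by_cases hj1 : j + 1 < k
      · have hfix := hfix1 (j + 1) hj1 0
        simp only [Int.cast_zero, add_zero] at hfix
        simpa [z, hj1] using ⟨hfix, (hyx j hj1).le⟩
      · obtain rfl : j = k - 1 := by omega
        have hfix := hfix1 0 (by omega) 1
        simp only [Int.cast_one] at hfix
        simpa [z, hj1] using ⟨hfix, hwrap.le⟩
    simpa [hf, z, hj] using (c₁ : CircleDeg1Lift).monotone.apply_apply_le_of_isFixedPt
      (c₂ : CircleDeg1Lift).monotone (hxy j hj).le hx.2 hy hx.1
  have hpow : (f ^ k) (x 0) ≤ x 0 + (1 : ℤ) := by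
    have := f.monotone.seq_le_seq k (x := fun n => f^[n] (x 0)) hz0.ge
      (fun n _ => (iterate_succ_apply' f n (x 0)).le) hstep
    simpa [CircleDeg1Lift.coe_pow, z] using this
  simpa using f.translationNumber_le_div_of_pow_apply_le (by omega) hpow
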